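/- Let X, Y ∈ A_q(n+1) with Y covering X (i.e., X ⊆ Y and dim Y = dim X + 1). Then in the bipartite graph of covering relations between the equivalence classes [Y] and [X]: every element of [Y] covers exactly q elements of [X], and every element of [X] is covered by exactly one element of [Y]. -/
import Mathlib


/-- The copy of `F^m` inside `F^n`: vectors whose coordinates of index `≥ m`
vanish. -/
def coordSpace (F : Type) [Field F] (n m : ℕ) : Submodule F (Fin n → F) where
  carrier := {v | ∀ i : Fin n, m ≤ (i : ℕ) → v i = 0}
  add_mem' := by
    intro a b ha hb i hi
    simp [ha i hi, hb i hi]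
  zero_mem' := by intro i hi; rfl
  smul_mem' := by
    intro c v hv i hi
    simp [hv i hi]

/-- The equivalence class `[X] = {Z ∈ A_q(n+1) : Z ∩ F^n = X ∩ F^n}` of an element
`X` of `A_q(n+1) = {X ⊆ F^(n+1) : X ⊄ F^n}`. -/
def eqClass (F : Type) [Field F] (n : ℕ) (X : Submodule F (Fin (n + 1) → F)) :
    Set (Submodule F (Fin (n + 1) → F)) :=
  {Z | ¬ Z ≤ coordSpace F (n + 1) n ∧
    Z ⊓ coordSpace F (n + 1) n = X ⊓ coordSpace F (n + 1) n}

open Module Submodule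

variable {F : Type} [Field F] {n : ℕ}

lemma mem_coordSpace_iff (v : Fin (n+1) → F) :
    v ∈ coordSpace F (n+1) n ↔ v (Fin.last n) = 0 := by
  constructor
  · intro h; exact h (Fin.last n) (by simp)
  · intro h i hi
    have hv : (i : ℕ) = n := le_antisymm (Nat.lt_succ_iff.mp i.isLt) hi
    have : i = Fin.last n := Fin.ext (by simp [hv])
    rwa [this]

lemma exists_gen {Z : Submodule F (Fin (n+1) → F)} (hZ : ¬ Z ≤ coordSpace F (n+1) n) :
    ∃ u ∈ Z, u (Fin.last n) = 1 := by
  obtain ⟨u, huZ, huW⟩ := SetLike.not_le_iff_exists.mp hZ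
  have h0 : u (Fin.last n) ≠ 0 := fun h => huW ((mem_coordSpace_iff u).mpr h)
  exact ⟨(u (Fin.last n))⁻¹ • u, Z.smul_mem _ huZ, by
    simp [Pi.smul_apply, smul_eq_mul, inv_mul_cancel₀ h0]⟩

lemma decomp {Z : Submodule F (Fin (n+1) → F)} {u : Fin (n+1) → F}
    (hu : u ∈ Z) (hu1 : u (Fin.last n) = 1) :
    Z = (Z ⊓ coordSpace F (n+1) n) ⊔ Submodule.span F {u} := by
  apply le_antisymm
  · intro z hz
    have h1 : z - z (Fin.last n) • u ∈ Z ⊓ coordSpace F (n+1) n := by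
      refine ⟨Z.sub_mem hz (Z.smul_mem _ hu), (mem_coordSpace_iff _).mpr ?_⟩
      simp [hu1]
    have h2 := add_mem (mem_sup_left h1)
      (mem_sup_right (smul_mem _ (z (Fin.last n)) (mem_span_singleton_self u)))
    rwa [sub_add_cancel] at h2
  · exact sup_le inf_le_left (span_le.mpr (by simpa using hu))

lemma rank_eq {Z : Submodule F (Fin (n+1) → F)} (hZ : ¬ Z ≤ coordSpace F (n+1) n) :
    finrank F Z = finrank F (Z ⊓ coordSpace F (n+1) n : Submodule F _) + 1 := by
  obtain ⟨u, huZ, hu1⟩ := exists_gen hZ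
  let φ : Z →ₗ[F] F :=
    { toFun := fun z => (z : Fin (n+1) → F) (Fin.last n)
      map_add' := fun a b => rfl
      map_smul' := fun c a => rfl }
  have hker : LinearMap.ker φ = (coordSpace F (n+1) n).comap Z.subtype := by
    ext z
    simp [φ, LinearMap.mem_ker, Submodule.mem_comap, mem_coordSpace_iff]
  have hrange : LinearMap.range φ = ⊤ := by
    rw [LinearMap.range_eq_top]
    intro c
    exact ⟨c • ⟨u, huZ⟩, by simp [φ, hu1]⟩
  have h1 := LinearMap.finrank_range_add_finrank_ker φ
  rw [hrange, hker, finrank_top] at h1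
  have h2 : finrank F ((coordSpace F (n+1) n).comap Z.subtype) =
      finrank F (Z ⊓ coordSpace F (n+1) n : Submodule F _) := by
    rw [← Submodule.map_comap_subtype]
    exact (Submodule.equivMapOfInjective Z.subtype (Submodule.injective_subtype Z) _).finrank_eq
  have h3 : finrank F F = 1 := Module.finrank_self F
  omega

set_option synthInstance.maxHeartbeats 1000000 in
/-- Let `X, Y ∈ A_q(n+1)` with `Y` covering `X`. In the bipartite graph of covering
relations between `[Y]` and `[X]`, every element of `[Y]` covers exactly `q` elements
of `[X]`, and every element of `[X]` is covered by exactly one element of `[Y]`. -/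
theorem class_covering_degrees (F : Type) [Field F] [Fintype F] (n : ℕ)
    (X Y : Submodule F (Fin (n + 1) → F))
    (hX : ¬ X ≤ coordSpace F (n + 1) n) (hY : ¬ Y ≤ coordSpace F (n + 1) n)
    (hXY : X ≤ Y) (hdim : Module.finrank F Y = Module.finrank F X + 1) :
    (∀ Y' ∈ eqClass F n Y,
      Nat.card {X' : Submodule F (Fin (n + 1) → F) //
          X' ∈ eqClass F n X ∧ X' ≤ Y' ∧
            Module.finrank F Y' = Module.finrank F X' + 1} = Fintype.card F) ∧
    (∀ X' ∈ eqClass F n X,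
      Nat.card {Y' : Submodule F (Fin (n + 1) → F) //
          Y' ∈ eqClass F n Y ∧ X' ≤ Y' ∧
            Module.finrank F Y' = Module.finrank F X' + 1} = 1) := by
  have hB : finrank F (Y ⊓ coordSpace F (n+1) n : Submodule F _)
      = finrank F (X ⊓ coordSpace F (n+1) n : Submodule F _) + 1 := by
    have h1 := rank_eq hX
    have h2 := rank_eq hY
    omega
  have hAB : X ⊓ coordSpace F (n+1) n ≤ Y ⊓ coordSpace F (n+1) n := inf_le_inf_right _ hXY
  constructor
  · -- part 1
    rintro Y' ⟨hY'1, hY'2⟩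
    obtain ⟨u, huY', hu1⟩ := exists_gen hY'1
    have hY'dec : Y' = (Y ⊓ coordSpace F (n+1) n) ⊔ Submodule.span F {u} := by
      rw [← hY'2]; exact decomp huY' hu1
    have hBle : Y ⊓ coordSpace F (n+1) n ≤ Y' := by rw [← hY'2]; exact inf_le_left
    have hY'rank : finrank F Y' = finrank F (Y ⊓ coordSpace F (n+1) n : Submodule F _) + 1 := by
      rw [rank_eq hY'1, hY'2]
    set A : Submodule F (Fin (n+1) → F) := X ⊓ coordSpace F (n+1) n with hAdef
    set B : Submodule F (Fin (n+1) → F) := Y ⊓ coordSpace F (n+1) n with hBdef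
    set Abar : Submodule F B := A.comap B.subtype with hAbardef
    -- coordinates of elements of B vanish at last
    have hBlast : ∀ b : B, (b : Fin (n+1) → F) (Fin.last n) = 0 :=
      fun b => (mem_coordSpace_iff _).mp b.2.2
    have hAlast : ∀ {a : Fin (n+1) → F}, a ∈ A → a (Fin.last n) = 0 :=
      fun ha => (mem_coordSpace_iff _).mp ha.2
    set fS : B → Submodule F (Fin (n+1) → F) :=
      fun b => A ⊔ Submodule.span F {u + (b : Fin (n+1) → F)} with hfSdef
    have hlast1 : ∀ b : B, (u + (b : Fin (n+1) → F)) (Fin.last n) = 1 := by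
      intro b; simp [hu1, hBlast b]
    have hmemf : ∀ b : B, u + (b : Fin (n+1) → F) ∈ fS b :=
      fun b => mem_sup_right (mem_span_singleton_self _)
    have hnot : ∀ b : B, ¬ fS b ≤ coordSpace F (n+1) n := by
      intro b h
      have := (mem_coordSpace_iff _).mp (h (hmemf b))
      rw [hlast1 b] at this
      exact one_ne_zero this
    have hinf : ∀ b : B, fS b ⊓ coordSpace F (n+1) n = A := by
      intro b
      apply le_antisymm
      · rintro z ⟨hz1, hz2⟩
        obtain ⟨a, ha, s, hs, heq⟩ := mem_sup.mp hz1
        obtain ⟨t, rfl⟩ := mem_span_singleton.mp hs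
        have hzl : z (Fin.last n) = 0 := (mem_coordSpace_iff _).mp hz2
        have ht : t = 0 := by
          have hc := congrFun heq (Fin.last n)
          simp only [Pi.add_apply, Pi.smul_apply, smul_eq_mul] at hc
          rw [hAlast ha, hu1, hBlast b, hzl] at hc
          simpa using hc
        rw [ht, zero_smul, add_zero] at heq
        rwa [← heq]
      · exact le_inf le_sup_left inf_le_right
    have hleY' : ∀ b : B, fS b ≤ Y' := by
      intro b
      refine sup_le (le_trans hAB hBle) (span_le.mpr ?_)
      intro z hz
      rcases hz with rfl
      exact Y'.add_mem huY' (hBle b.2)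
    have hrankf : ∀ b : B, finrank F Y' = finrank F (fS b) + 1 := by
      intro b
      have := rank_eq (hnot b)
      rw [hinf b] at this
      omega
    have hmono : ∀ b b' : B, ((b : Fin (n+1) → F) - b') ∈ A → fS b ≤ fS b' := by
      intro b b' hd
      refine sup_le le_sup_left (span_le.mpr ?_)
      intro z hz
      rcases hz with rfl
      have heq : u + (b : Fin (n+1) → F) = ((b : Fin (n+1) → F) - b') + (u + b') := by abel
      rw [heq]
      exact add_mem (mem_sup_left hd) (hmemf b')
    have hcongr : ∀ b b' : B, ((b : Fin (n+1) → F) - b') ∈ A → fS b = fS b' := by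
      intro b b' hd
      refine le_antisymm (hmono b b' hd) (hmono b' b ?_)
      simpa using A.neg_mem hd
    set S := {X' : Submodule F (Fin (n + 1) → F) //
        X' ∈ eqClass F n X ∧ X' ≤ Y' ∧
          Module.finrank F Y' = Module.finrank F X' + 1} with hSdef
    set fS' : B → S := fun b => ⟨fS b, ⟨hnot b, hinf b⟩, hleY' b, hrankf b⟩ with hfS'def
    have hresp : ∀ b b' : B, Abar.quotientRel b b' → fS' b = fS' b' := by
      intro b b' hr
      have hd : (b : Fin (n+1) → F) - b' ∈ A := by
        have := (Submodule.quotientRel_def Abar).mp hr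
        simpa [Abar] using this
      exact Subtype.ext (hcongr b b' hd)
    let g : (B ⧸ Abar) → S := fun q => Quotient.lift fS' hresp q
    have hg : ∀ b : B, g (Submodule.Quotient.mk b) = fS' b := fun b => rfl
    have hbij : Function.Bijective g := by
      constructor
      · intro q1 q2 h
        obtain ⟨b, rfl⟩ := Submodule.Quotient.mk_surjective Abar q1
        obtain ⟨b', rfl⟩ := Submodule.Quotient.mk_surjective Abar q2
        rw [hg, hg] at h
        have hXX : fS b = fS b' := congrArg Subtype.val h
        have hm : u + (b : Fin (n+1) → F) ∈ fS b' := by rw [← hXX]; exact hmemf b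
        obtain ⟨a, ha, s, hs, heq⟩ := mem_sup.mp hm
        obtain ⟨t, rfl⟩ := mem_span_singleton.mp hs
        have ht : t = 1 := by
          have hc := congrFun heq (Fin.last n)
          simp only [Pi.add_apply, Pi.smul_apply, smul_eq_mul] at hc
          rw [hAlast ha, hu1, hBlast b, hBlast b'] at hc
          simpa using hc
        rw [ht, one_smul] at heq
        have hd : (b : Fin (n+1) → F) - b' = a := by
          rw [eq_sub_of_add_eq heq]
          abel
        rw [Submodule.Quotient.eq]
        show (b - b' : B) ∈ Abar
        rw [Submodule.mem_comap]
        have hcoe : B.subtype (b - b') = (b : Fin (n+1) → F) - b' := by simp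
        rw [hcoe, hd]
        exact ha
      · rintro ⟨X', ⟨hX'1, hX'2⟩, hle, hd⟩
        obtain ⟨x, hxX', hx1⟩ := exists_gen hX'1
        have hxY' : x ∈ Y' := hle hxX'
        rw [hY'dec] at hxY'
        obtain ⟨c, hc, s, hs, heq⟩ := mem_sup.mp hxY'
        obtain ⟨t, rfl⟩ := mem_span_singleton.mp hs
        have ht : t = 1 := by
          have hcl : c (Fin.last n) = 0 := (mem_coordSpace_iff _).mp hc.2
          have := congrFun heq (Fin.last n)
          simp only [Pi.add_apply, Pi.smul_apply, smul_eq_mul, hcl, hu1, hx1,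
            zero_add, mul_one] at this
          exact this
        rw [ht, one_smul] at heq
        refine ⟨Submodule.Quotient.mk ⟨c, hc⟩, ?_⟩
        rw [hg]
        apply Subtype.ext
        have hXdec := decomp hxX' hx1
        rw [hX'2] at hXdec
        have hx' : u + c = x := by rw [← heq]; abel
        show A ⊔ Submodule.span F {u + c} = X'
        have hspan : Submodule.span F {u + c} = Submodule.span F {x} := by rw [hx']
        rw [hXdec, hAdef, hspan]
    have hcard : Nat.card (B ⧸ Abar) = Nat.card S := Nat.card_eq_of_bijective g hbij
    have hq1 : finrank F (B ⧸ Abar) = 1 := by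
      have h3 := Submodule.finrank_quotient_add_finrank Abar
      have h4 : finrank F Abar = finrank F A := (Submodule.comapSubtypeEquivOfLe hAB).finrank_eq
      omega
    have hFq : finrank F (B ⧸ Abar) = finrank F F := by rw [hq1, Module.finrank_self]
    obtain ⟨e⟩ := FiniteDimensional.nonempty_linearEquiv_of_finrank_eq hFq
    have : Nat.card (B ⧸ Abar) = Nat.card F := Nat.card_congr e.toEquiv
    rw [← hcard, this, Nat.card_eq_fintype_card]
  · -- part 2
    rintro X' ⟨hX'1, hX'2⟩
    obtain ⟨u, huX', hu1⟩ := exists_gen hX'1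
    set Y₀ : Submodule F (Fin (n+1) → F) := (Y ⊓ coordSpace F (n+1) n) ⊔ X' with hY₀def
    have hY₀dec : Y₀ = (Y ⊓ coordSpace F (n+1) n) ⊔ Submodule.span F {u} := by
      rw [hY₀def, decomp huX' hu1, hX'2, ← sup_assoc, sup_eq_left.mpr hAB]
    have huY₀ : u ∈ Y₀ := mem_sup_right huX'
    have hnot : ¬ Y₀ ≤ coordSpace F (n+1) n := by
      intro h
      have := (mem_coordSpace_iff _).mp (h huY₀)
      rw [hu1] at this
      exact one_ne_zero this
    have hinf : Y₀ ⊓ coordSpace F (n+1) n = Y ⊓ coordSpace F (n+1) n := by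
      apply le_antisymm
      · rintro z ⟨hz1, hz2⟩
        rw [hY₀dec] at hz1
        obtain ⟨c, hc, s, hs, heq⟩ := mem_sup.mp hz1
        obtain ⟨t, rfl⟩ := mem_span_singleton.mp hs
        have hzl : z (Fin.last n) = 0 := (mem_coordSpace_iff _).mp hz2
        have hcl : c (Fin.last n) = 0 := (mem_coordSpace_iff _).mp hc.2
        have := congrFun heq (Fin.last n)
        simp only [Pi.add_apply, Pi.smul_apply, smul_eq_mul, hcl, hu1, hzl,
          zero_add, mul_one] at this
        rw [this] at heq
        simp at heq
        rwa [← heq]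
      · exact le_inf le_sup_left inf_le_right
    have hd0 : finrank F Y₀ = finrank F X' + 1 := by
      have h1 := rank_eq hnot
      rw [hinf] at h1
      have h2 := rank_eq hX'1
      rw [hX'2] at h2
      omega
    have hkey : ∀ Y₁ : Submodule F (Fin (n+1) → F), Y₁ ∈ eqClass F n Y → X' ≤ Y₁ → Y₁ = Y₀ := by
      rintro Y₁ ⟨h11, h12⟩ hle1
      have := decomp (hle1 huX') hu1
      rw [h12] at this
      rw [this, hY₀dec]
    rw [Nat.card_eq_one_iff_unique]
    constructor
    · constructor
      intro a b
      apply Subtype.ext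
      rw [hkey a.1 a.2.1 a.2.2.1, hkey b.1 b.2.1 b.2.2.1]
    · exact ⟨⟨Y₀, ⟨hnot, hinf⟩, le_sup_right, hd0⟩⟩
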